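/- Let f : {-1,1}^n → ℝ satisfy Σ_{S⊆{1,...,n}} |f̂(S)| ≤ s, and let ε > 0. Define g : {-1,1}^n → ℝ by keeping exactly those Fourier terms of f whose coefficient has magnitude at least ε/s, i.e., g = Σ_{S : |f̂(S)| ≥ ε/s} f̂(S)·χ_S. Then g has at most s²/ε nonzero Fourier coefficients, and E_{x uniform on {-1,1}^n}[(f(x) − g(x))²] ≤ ε. -/

import Mathlib

open Finset
open scoped Classical

noncomputable def cube (n : ℕ) : Finset (Fin n → ℝ) :=
  Fintype.piFinset fun _ => ({-1, 1} : Finset ℝ)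

def chi {n : ℕ} (S : Finset (Fin n)) (x : Fin n → ℝ) : ℝ := ∏ i ∈ S, x i

noncomputable def expectation {n : ℕ} (g : (Fin n → ℝ) → ℝ) : ℝ :=
  (2 ^ n : ℝ)⁻¹ * ∑ x ∈ cube n, g x

noncomputable def fhat {n : ℕ} (f : (Fin n → ℝ) → ℝ) (S : Finset (Fin n)) : ℝ :=
  expectation fun x => f x * chi S x

/-!
The kept coefficients have absolute value at least `ε / s` and total mass at most `s`, so by
Markov's inequality there are at most `s ^ 2 / ε` of them. By Parseval, `E[(f - g)²]` is the sum
of `f̂(S)²` over the discarded coefficients; each satisfies `f̂(S)² ≤ (ε / s) |f̂(S)|`, so the sum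
is at most `(ε / s) ∑ |f̂(S)| ≤ ε`.
-/

lemma mem_cube_iff {n : ℕ} {x : Fin n → ℝ} : x ∈ cube n ↔ ∀ i, x i = -1 ∨ x i = 1 := by
  simp [cube, Fintype.mem_piFinset]

lemma sum_cube_prod {n : ℕ} (h : Fin n → ℝ → ℝ) :
    ∑ x ∈ cube n, ∏ i, h i (x i) = ∏ i, (h i (-1) + h i 1) := by
  rw [cube, sum_prod_piFinset]
  exact prod_congr rfl fun i _ => sum_pair (by norm_num)

lemma chi_eq_prod_ite {n : ℕ} (S : Finset (Fin n)) (x : Fin n → ℝ) :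
    chi S x = ∏ i, if i ∈ S then x i else 1 := by
  rw [prod_ite_mem, univ_inter, chi]

lemma expectation_congr {n : ℕ} {F G : (Fin n → ℝ) → ℝ} (h : ∀ x ∈ cube n, F x = G x) :
    expectation F = expectation G := by
  rw [expectation, expectation, sum_congr rfl h]

lemma expectation_sum {n : ℕ} {ι : Type*} (t : Finset ι) (F : ι → (Fin n → ℝ) → ℝ) :
    expectation (fun x => ∑ i ∈ t, F i x) = ∑ i ∈ t, expectation (F i) := by
  rw [expectation, sum_comm, mul_sum]
  rfl

lemma expectation_const_mul {n : ℕ} (c : ℝ) (F : (Fin n → ℝ) → ℝ) :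
    expectation (fun x => c * F x) = c * expectation F := by
  rw [expectation, expectation, ← mul_sum, mul_left_comm]

lemma expectation_sub {n : ℕ} (F G : (Fin n → ℝ) → ℝ) :
    expectation (fun x => F x - G x) = expectation F - expectation G := by
  rw [expectation, expectation, expectation, sum_sub_distrib, mul_sub]

lemma fhat_sub {n : ℕ} (f g : (Fin n → ℝ) → ℝ) (S : Finset (Fin n)) :
    fhat (fun x => f x - g x) S = fhat f S - fhat g S := by
  simp only [fhat, sub_mul, expectation_sub]

lemma expectation_chi_mul_chi {n : ℕ} (S T : Finset (Fin n)) :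
    expectation (fun x => chi S x * chi T x) = if S = T then 1 else 0 := by
  have coord (i : Fin n) :
      (if i ∈ S then (-1 : ℝ) else 1) * (if i ∈ T then -1 else 1)
        + (if i ∈ S then 1 else 1) * (if i ∈ T then 1 else 1)
        = if (i ∈ S ↔ i ∈ T) then 2 else 0 := by
    by_cases hS : i ∈ S <;> by_cases hT : i ∈ T <;> norm_num [hS, hT]
  simp only [expectation, chi_eq_prod_ite, ← prod_mul_distrib]
  rw [sum_cube_prod (fun i v => (if i ∈ S then v else 1) * (if i ∈ T then v else 1))]
  simp only [coord, Fintype.prod_ite_zero, ← Finset.ext_iff]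
  split_ifs <;> simp

lemma sum_chi_mul_chi {n : ℕ} {x y : Fin n → ℝ} (hx : x ∈ cube n) (hy : y ∈ cube n) :
    ∑ S : Finset (Fin n), chi S x * chi S y = if x = y then 2 ^ n else 0 := by
  have coord (i : Fin n) : 1 + x i * y i = if x i = y i then 2 else 0 := by
    rcases mem_cube_iff.mp hx i with h | h <;> rcases mem_cube_iff.mp hy i with h' | h' <;>
      norm_num [h, h']
  simp only [chi, ← prod_mul_distrib, ← powerset_univ, ← prod_one_add, coord,
    Fintype.prod_ite_zero, ← funext_iff]
  split_ifs <;> simp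

lemma fourier_inversion {n : ℕ} (f : (Fin n → ℝ) → ℝ) {x : Fin n → ℝ} (hx : x ∈ cube n) :
    ∑ S : Finset (Fin n), fhat f S * chi S x = f x := by
  have term (S : Finset (Fin n)) :
      fhat f S * chi S x = expectation fun y => f y * (chi S y * chi S x) := by
    rw [fhat, mul_comm, ← expectation_const_mul]
    congr 1 with y
    ring
  simp only [term, ← expectation_sum, ← mul_sum]
  rw [expectation_congr fun y hy => by rw [sum_chi_mul_chi hy hx]]
  simp only [expectation, mul_ite, mul_zero, sum_ite_eq', hx, if_true]
  field_simp

lemma parseval {n : ℕ} (h : (Fin n → ℝ) → ℝ) :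
    expectation (fun x => h x ^ 2) = ∑ S : Finset (Fin n), fhat h S ^ 2 := by
  calc expectation (fun x => h x ^ 2)
      = expectation (fun x => ∑ S : Finset (Fin n), fhat h S * (h x * chi S x)) :=
        expectation_congr fun x hx => by
          simp only [mul_left_comm _ (h x), ← mul_sum, fourier_inversion h hx, sq]
    _ = ∑ S : Finset (Fin n), fhat h S ^ 2 := by
        simp only [expectation_sum, expectation_const_mul, sq]
        rfl

lemma fhat_sum_mul_chi {n : ℕ} (F : Finset (Finset (Fin n))) (a : Finset (Fin n) → ℝ)
    (T : Finset (Fin n)) :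
    fhat (fun x => ∑ S ∈ F, a S * chi S x) T = if T ∈ F then a T else 0 := by
  simp only [fhat, sum_mul, mul_assoc, expectation_sum, expectation_const_mul,
    expectation_chi_mul_chi, mul_ite, mul_one, mul_zero, sum_ite_eq']

section Truncation

variable {ι : Type*} [Fintype ι] {a : ι → ℝ} {s ε : ℝ}

lemma nonneg_of_sum_abs_le (h : ∑ i, |a i| ≤ s) : 0 ≤ s :=
  (sum_nonneg fun i _ => abs_nonneg (a i)).trans h

-- The condition `a i ≠ 0` matters only for `s = 0`, where `ε / s = 0` selects every index.
lemma card_ne_zero_and_le_abs_le (hε : 0 < ε) (h : ∑ i, |a i| ≤ s) :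
    (#{i | a i ≠ 0 ∧ ε / s ≤ |a i|} : ℝ) ≤ s ^ 2 / ε := by
  obtain hs | hs := (nonneg_of_sum_abs_le h).eq_or_lt
  · have ha (i : ι) : a i = 0 := abs_nonpos_iff.mp <|
      (single_le_sum (fun j _ => abs_nonneg (a j)) (mem_univ i)).trans (h.trans hs.ge)
    simp [ha, ← hs]
  have markov : #{i | ε / s ≤ |a i|} • (ε / s) ≤ ∑ i, |a i| :=
    (card_nsmul_le_sum _ _ _ fun i hi => (mem_filter.mp hi).2).trans
      (sum_le_sum_of_subset_of_nonneg (filter_subset _ _) fun i _ _ => abs_nonneg (a i))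
  rw [nsmul_eq_mul] at markov
  calc (#{i | a i ≠ 0 ∧ ε / s ≤ |a i|} : ℝ) ≤ #{i | ε / s ≤ |a i|} := by
        gcongr with i
        exact And.right
    _ ≤ s / (ε / s) := (le_div_iff₀ (by positivity)).mpr (markov.trans h)
    _ = s ^ 2 / ε := by field_simp

lemma sum_sq_of_abs_lt_le (hε : 0 ≤ ε) (h : ∑ i, |a i| ≤ s) :
    ∑ i with |a i| < ε / s, a i ^ 2 ≤ ε := by
  have hs := nonneg_of_sum_abs_le h
  calc ∑ i with |a i| < ε / s, a i ^ 2 ≤ ∑ i with |a i| < ε / s, ε / s * |a i| :=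
        sum_le_sum fun i hi => by
          rw [← sq_abs, sq]
          exact mul_le_mul_of_nonneg_right (mem_filter.mp hi).2.le (abs_nonneg _)
    _ ≤ ∑ i, ε / s * |a i| :=
        sum_le_sum_of_subset_of_nonneg (filter_subset _ _) fun i _ _ => by positivity
    _ ≤ ε / s * s := by rw [← mul_sum]; gcongr
    _ ≤ ε := by
        rcases hs.eq_or_lt with rfl | hs
        · simpa using hε
        · rw [div_mul_cancel₀ _ hs.ne']

end Truncation

/-- Truncating an L1-bounded function to its Fourier coefficients of magnitude at least ε/s
yields an (s²/ε)-sparse function that is ε-close to f in squared L2 distance. -/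
theorem sparse_approximation (n : ℕ) (f : (Fin n → ℝ) → ℝ) (s ε : ℝ) (hε : 0 < ε)
    (hL1 : ∑ S : Finset (Fin n), |fhat f S| ≤ s)
    (g : (Fin n → ℝ) → ℝ)
    (hg : g = fun x =>
      ∑ S ∈ Finset.univ.filter (fun S : Finset (Fin n) => ε / s ≤ |fhat f S|),
        fhat f S * chi S x) :
    ((Finset.univ.filter fun S : Finset (Fin n) => fhat g S ≠ 0).card : ℝ) ≤ s ^ 2 / ε ∧
    expectation (fun x => (f x - g x) ^ 2) ≤ ε := by
  have hghat (S : Finset (Fin n)) : fhat g S = if ε / s ≤ |fhat f S| then fhat f S else 0 := by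
    simp [hg, fhat_sum_mul_chi]
  constructor
  · have support_eq : (univ.filter fun S => fhat g S ≠ 0) =
        univ.filter fun S => fhat f S ≠ 0 ∧ ε / s ≤ |fhat f S| := by
      ext S
      by_cases hS : ε / s ≤ |fhat f S| <;> simp [hghat, hS]
    rw [support_eq]
    exact card_ne_zero_and_le_abs_le hε hL1
  · have tail (S : Finset (Fin n)) :
        fhat (fun x => f x - g x) S ^ 2 = if |fhat f S| < ε / s then fhat f S ^ 2 else 0 := by
      by_cases hS : ε / s ≤ |fhat f S| <;> simp [fhat_sub, hghat, hS]
    rw [parseval, sum_congr rfl fun S _ => tail S, ← sum_filter]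
    exact sum_sq_of_abs_lt_le hε.le hL1
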